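/- arXiv:1902.01680 — 6 statements merged into one kernel-verified Lean document; each statement's English description precedes it below -/
import Mathlib

section
/- Let {α_n} be a sequence of non-negative real numbers, and let 0 < γ < 1, C > 0, y ≥ 0 be constants such that α_n ≤ α_{n-1} + C((α_{n-1})^{1-γ} + 1)(1 + n)^y for all n ≥ 1. Then there exists a constant C̃ > 0 such that α_n ≤ C̃(1 + n)^{(1+y)/γ} for all n ≥ 1. -/
open Real

theorem stmt_0 (α : ℕ → ℝ) (hα : ∀ n, 0 ≤ α n)
    (γ C y : ℝ) (hγ0 : 0 < γ) (hγ1 : γ < 1) (hC : 0 < C) (hy : 0 ≤ y)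
    (hrec : ∀ n : ℕ, 1 ≤ n →
      α n ≤ α (n - 1) + C * ((α (n - 1)) ^ (1 - γ) + 1) * (1 + (n : ℝ)) ^ y) :
    ∃ Ct : ℝ, 0 < Ct ∧ ∀ n : ℕ, 1 ≤ n →
      α n ≤ Ct * (1 + (n : ℝ)) ^ ((1 + y) / γ) := by
  set p := (1 + y) / γ with hp
  have hp1 : 1 ≤ p := by
    rw [hp, le_div_iff₀ hγ0]; linarith
  have hyp : y ≤ p - 1 := by
    rw [hp, le_sub_iff_add_le, le_div_iff₀ hγ0]; nlinarith
  have h2y : (0:ℝ) < (2:ℝ) ^ (y:ℝ) := rpow_pos_of_pos two_pos y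
  set K := 2 * C * (2:ℝ) ^ (y:ℝ) with hK
  have hKpos : 0 < K := by positivity
  set Ct := max (α 1 + 1) (max 1 (max K (K ^ (1/γ)))) with hCt
  have hCt1 : (1:ℝ) ≤ Ct :=
    le_trans (le_max_left 1 _) (le_max_right _ _)
  have hCtpos : 0 < Ct := lt_of_lt_of_le one_pos hCt1
  have hCtK : K ≤ Ct :=
    le_trans (le_trans (le_max_left _ _) (le_max_right _ _)) (le_max_right _ _)
  have hCtKγ : K ^ (1/γ) ≤ Ct :=
    le_trans (le_trans (le_max_right _ _) (le_max_right _ _)) (le_max_right _ _)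
  have hCtγ : K ≤ Ct ^ γ := by
    calc K = (K ^ (1/γ)) ^ γ := by
            rw [← rpow_mul hKpos.le, one_div_mul_cancel hγ0.ne', rpow_one]
      _ ≤ Ct ^ γ := rpow_le_rpow (rpow_nonneg hKpos.le _) hCtKγ hγ0.le
  have hkey : C * (2:ℝ) ^ y * Ct ^ (1 - γ) ≤ Ct / 2 := by
    have h1 : Ct ^ (1-γ) = Ct / Ct ^ γ := by
      rw [rpow_sub hCtpos, rpow_one]
    have h2 : Ct / Ct ^ γ ≤ Ct / K :=
      div_le_div_of_nonneg_left hCtpos.le hKpos hCtγ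
    calc C * (2:ℝ) ^ y * Ct ^ (1-γ) ≤ C * (2:ℝ) ^ y * (Ct / K) := by
          rw [h1]; exact mul_le_mul_of_nonneg_left h2 (by positivity)
      _ = Ct / 2 := by rw [hK]; field_simp
  have hkey2 : C * (2:ℝ) ^ y ≤ Ct / 2 := by
    nlinarith [hKpos, hCtK]
  refine ⟨Ct, hCtpos, ?_⟩
  intro n hn
  induction n, hn using Nat.le_induction with
  | base =>
    have h2p : (1:ℝ) ≤ (1 + (1:ℕ) : ℝ) ^ p := by
      push_cast
      rw [show ((1:ℝ)+1) = 2 by norm_num]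
      exact one_le_rpow (by norm_num) (by linarith)
    have : α 1 ≤ Ct := le_trans (by linarith [hα 1]) (le_max_left _ _)
    calc α 1 ≤ Ct * 1 := by linarith
      _ ≤ Ct * (1 + (1:ℕ) : ℝ) ^ p := by
          exact mul_le_mul_of_nonneg_left h2p hCtpos.le
  | succ n hn IH =>
    set x : ℝ := 1 + (n:ℝ) with hx
    have hx1 : (1:ℝ) ≤ x := by
      rw [hx]; have : (1:ℝ) ≤ (n:ℝ) := by exact_mod_cast hn
      linarith
    have hx0 : (0:ℝ) < x := by linarith
    have hnc : ((n+1 : ℕ) : ℝ) = (n:ℝ) + 1 := by push_cast; ring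
    have hrec' := hrec (n+1) (by omega)
    rw [show (n+1) - 1 = n from rfl] at hrec'
    have hcast : (1 + ((n+1:ℕ) : ℝ)) = x + 1 := by rw [hx]; push_cast; ring
    rw [hcast] at hrec' ⊢
    -- bound α n ^ (1-γ)
    have h1γ : (0:ℝ) ≤ 1 - γ := by linarith
    have h1 : α n ^ (1-γ) ≤ Ct ^ (1-γ) * x ^ (p*(1-γ)) := by
      calc α n ^ (1-γ) ≤ (Ct * x ^ p) ^ (1-γ) :=
            rpow_le_rpow (hα n) IH h1γ
        _ = Ct ^ (1-γ) * x ^ (p*(1-γ)) := by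
            rw [mul_rpow hCtpos.le (rpow_nonneg hx0.le _), ← rpow_mul hx0.le]
    have h2 : (x+1) ^ y ≤ (2:ℝ) ^ y * x ^ y := by
      rw [← mul_rpow (by norm_num) hx0.le]
      exact rpow_le_rpow (by linarith) (by linarith) hy
    have hxy : x ^ y ≤ x ^ (p-1) := rpow_le_rpow_of_exponent_le hx1 hyp
    have hexp : p*(1-γ) + y = p - 1 := by
      rw [hp]; field_simp; ring
    have hmul : x ^ (p*(1-γ)) * x ^ y = x ^ (p-1) := by
      rw [← rpow_add hx0, hexp]
    -- big chain
    have hb : C * ((α n) ^ (1-γ) + 1) * (x+1) ^ y ≤ Ct * x ^ (p-1) := by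
      have hαn1 : (0:ℝ) ≤ (α n) ^ (1-γ) + 1 := add_nonneg (rpow_nonneg (hα n) _) zero_le_one
      have step1 : C * ((α n) ^ (1-γ) + 1) * (x+1) ^ y
          ≤ C * ((α n) ^ (1-γ) + 1) * ((2:ℝ) ^ y * x ^ y) := by
        exact mul_le_mul_of_nonneg_left h2 (mul_nonneg hC.le hαn1)
      have step2 : C * ((α n) ^ (1-γ) + 1) * ((2:ℝ) ^ y * x ^ y)
          ≤ C * (Ct ^ (1-γ) * x ^ (p*(1-γ)) + 1) * ((2:ℝ) ^ y * x ^ y) := by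
        have : (0:ℝ) ≤ (2:ℝ) ^ y * x ^ y := by positivity
        apply mul_le_mul_of_nonneg_right _ this
        apply mul_le_mul_of_nonneg_left (by linarith) hC.le
      have step3 : C * (Ct ^ (1-γ) * x ^ (p*(1-γ)) + 1) * ((2:ℝ) ^ y * x ^ y)
          = (C * (2:ℝ)^y * Ct ^ (1-γ)) * x ^ (p-1) + (C * (2:ℝ)^y) * x ^ y := by
        rw [← hmul]; ring
      have hxp1 : (0:ℝ) ≤ x ^ (p-1) := by positivity
      calc C * ((α n) ^ (1-γ) + 1) * (x+1) ^ y
          ≤ (C * (2:ℝ)^y * Ct ^ (1-γ)) * x ^ (p-1) + (C * (2:ℝ)^y) * x ^ y := by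
            rw [← step3]; exact le_trans step1 step2
        _ ≤ (Ct/2) * x ^ (p-1) + (Ct/2) * x ^ (p-1) := by
            have a1 : (C * (2:ℝ)^y * Ct ^ (1-γ)) * x ^ (p-1) ≤ (Ct/2) * x ^ (p-1) :=
              mul_le_mul_of_nonneg_right hkey hxp1
            have a2 : (C * (2:ℝ)^y) * x ^ y ≤ (Ct/2) * x ^ (p-1) := by
              calc (C * (2:ℝ)^y) * x ^ y ≤ (C * (2:ℝ)^y) * x ^ (p-1) :=
                    mul_le_mul_of_nonneg_left hxy (by positivity)
                _ ≤ (Ct/2) * x ^ (p-1) := mul_le_mul_of_nonneg_right hkey2 hxp1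
            linarith
        _ = Ct * x ^ (p-1) := by ring
    -- Bernoulli
    have hbern : x ^ p + x ^ (p-1) ≤ (x+1) ^ p := by
      have hs0 : (0:ℝ) ≤ 1/x := by positivity
      have hb1 : 1 + p * (1/x) ≤ (1 + 1/x) ^ p :=
        one_add_mul_self_le_rpow_one_add (by linarith) hp1
      have hxx : (x+1) = x * (1 + 1/x) := by field_simp
      have : (x+1) ^ p = x ^ p * (1 + 1/x) ^ p := by
        rw [hxx, mul_rpow hx0.le (by positivity)]
      rw [this]
      have h3 : x ^ p * (1 + p * (1/x)) ≤ x ^ p * (1 + 1/x) ^ p :=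
        mul_le_mul_of_nonneg_left hb1 (by positivity)
      have h4 : x ^ p * (1 + p * (1/x)) = x ^ p + p * (x ^ p / x) := by ring
      have h5 : x ^ p / x = x ^ (p-1) := by
        rw [rpow_sub hx0, rpow_one]
      have h6 : x ^ (p-1) ≤ p * x ^ (p-1) :=
        le_mul_of_one_le_left (rpow_nonneg hx0.le _) hp1
      rw [h4, h5] at h3
      linarith
    calc α (n+1) ≤ α n + C * ((α n) ^ (1-γ) + 1) * (x+1) ^ y := hrec'
      _ ≤ Ct * x ^ p + Ct * x ^ (p-1) := by linarith [IH]
      _ ≤ Ct * (x + 1) ^ p := by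
          have := mul_le_mul_of_nonneg_left hbern hCtpos.le
          linarith [this]
end

section
/- Let {α_n} be a sequence of positive real numbers, 0 < γ < 1, C₂ > 0, y ≥ 0 with α_n ≤ α_{n-1} + C₂ (α_{n-1})^{1-γ} (1 + n)^y for all n ≥ 1, and suppose α_n ≥ 1 for all n. Then there exists C̃ > 0 such that α_n ≤ C̃ (1 + n)^{(1+y)/γ} for all n ≥ 1. -/
open Real

theorem stmt_2 (α : ℕ → ℝ) (hα : ∀ n, 0 < α n) (hα1 : ∀ n, 1 ≤ α n)
    (γ C₂ y : ℝ) (hγ0 : 0 < γ) (hγ1 : γ < 1) (hC : 0 < C₂) (hy : 0 ≤ y)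
    (hrec : ∀ n : ℕ, 1 ≤ n →
      α n ≤ α (n - 1) + C₂ * (α (n - 1)) ^ (1 - γ) * (1 + (n : ℝ)) ^ y) :
    ∃ Ct : ℝ, 0 < Ct ∧ ∀ n : ℕ, 1 ≤ n →
      α n ≤ Ct * (1 + (n : ℝ)) ^ ((1 + y) / γ) := by
  -- key concavity bound: (x + C₂ x^(1-γ) t)^γ ≤ x^γ + γ C₂ t for x ≥ 1, t ≥ 0
  have key : ∀ x t : ℝ, 1 ≤ x → 0 ≤ t →
      (x + C₂ * x ^ (1 - γ) * t) ^ γ ≤ x ^ γ + γ * C₂ * t := by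
    intro x t hx ht
    have hx0 : (0:ℝ) < x := lt_of_lt_of_le one_pos hx
    set z : ℝ := C₂ * x ^ (-γ) * t with hz
    have hz0 : 0 ≤ z := by positivity
    have hrw : x + C₂ * x ^ (1 - γ) * t = x * (1 + z) := by
      have : x ^ (1 - γ) = x * x ^ (-γ) := by
        rw [show (1:ℝ) - γ = 1 + (-γ) by ring, Real.rpow_add hx0, Real.rpow_one]
      rw [this, hz]; ring
    rw [hrw, Real.mul_rpow (le_of_lt hx0) (by linarith)]
    have hbern : (1 + z) ^ γ ≤ 1 + γ * z :=
      rpow_one_add_le_one_add_mul_self (by linarith) (le_of_lt hγ0) (le_of_lt hγ1)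
    have hxg : 0 < x ^ γ := Real.rpow_pos_of_pos hx0 γ
    calc x ^ γ * (1 + z) ^ γ ≤ x ^ γ * (1 + γ * z) :=
          mul_le_mul_of_nonneg_left hbern (le_of_lt hxg)
      _ = x ^ γ + γ * C₂ * t * (x ^ γ * x ^ (-γ)) := by rw [hz]; ring
      _ = x ^ γ + γ * C₂ * t := by
          rw [← Real.rpow_add hx0]; simp
  -- main induction: α n ^ γ ≤ α 0 ^ γ + γ C₂ n (1+n)^y
  have main : ∀ n : ℕ, α n ^ γ ≤ α 0 ^ γ + γ * C₂ * n * (1 + (n:ℝ)) ^ y := by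
    intro n
    induction n with
    | zero => simp
    | succ n ih =>
      have h1 : α (n + 1) ≤ α n + C₂ * (α n) ^ (1 - γ) * (1 + ((n:ℝ) + 1)) ^ y := by
        have := hrec (n + 1) (Nat.le_add_left 1 n)
        simpa using this
      have ht : (0:ℝ) ≤ (1 + ((n:ℝ) + 1)) ^ y := by positivity
      have h2 : α (n + 1) ^ γ ≤ (α n + C₂ * (α n) ^ (1 - γ) * (1 + ((n:ℝ) + 1)) ^ y) ^ γ :=
        Real.rpow_le_rpow (le_of_lt (hα _)) h1 (le_of_lt hγ0)
      have h3 := key (α n) ((1 + ((n:ℝ) + 1)) ^ y) (hα1 n) ht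
      have hmono : (1 + (n:ℝ)) ^ y ≤ (1 + ((n:ℝ) + 1)) ^ y :=
        Real.rpow_le_rpow (by positivity) (by linarith) hy
      have hcast : ((n + 1 : ℕ) : ℝ) = (n:ℝ) + 1 := by push_cast; ring
      rw [hcast]
      calc α (n + 1) ^ γ ≤ α n ^ γ + γ * C₂ * (1 + ((n:ℝ) + 1)) ^ y := h2.trans h3
      _ ≤ (α 0 ^ γ + γ * C₂ * n * (1 + (n:ℝ)) ^ y) + γ * C₂ * (1 + ((n:ℝ) + 1)) ^ y := by
          linarith
      _ ≤ α 0 ^ γ + γ * C₂ * ((n:ℝ) + 1) * (1 + ((n:ℝ) + 1)) ^ y := by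
          have h4 : γ * C₂ * n * (1 + (n:ℝ)) ^ y ≤ γ * C₂ * n * (1 + ((n:ℝ) + 1)) ^ y := by
            apply mul_le_mul_of_nonneg_left hmono (by positivity)
          nlinarith
  -- conclude
  set B : ℝ := α 0 ^ γ + γ * C₂ with hB
  have hB0 : 0 < B := by
    have : 0 < α 0 ^ γ := Real.rpow_pos_of_pos (hα 0) γ
    positivity
  refine ⟨B ^ (1 / γ), Real.rpow_pos_of_pos hB0 _, fun n hn => ?_⟩
  have hn1 : (1:ℝ) ≤ 1 + (n:ℝ) := by linarith [Nat.cast_nonneg (α := ℝ) n]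
  have hone : (1:ℝ) ≤ (1 + (n:ℝ)) ^ (1 + y) :=
    Real.one_le_rpow hn1 (by linarith)
  have hbound : α n ^ γ ≤ B * (1 + (n:ℝ)) ^ (1 + y) := by
    have h1 := main n
    have hsplit : (1 + (n:ℝ)) ^ (1 + y) = (1 + (n:ℝ)) * (1 + (n:ℝ)) ^ y := by
      rw [Real.rpow_add (by positivity), Real.rpow_one]
    have h2 : γ * C₂ * n * (1 + (n:ℝ)) ^ y ≤ γ * C₂ * (1 + (n:ℝ)) ^ (1 + y) := by
      have h5 : (n:ℝ) * (1 + (n:ℝ)) ^ y ≤ (1 + (n:ℝ)) * (1 + (n:ℝ)) ^ y := by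
        apply mul_le_mul_of_nonneg_right (by linarith) (by positivity)
      calc γ * C₂ * n * (1 + (n:ℝ)) ^ y = γ * C₂ * ((n:ℝ) * (1 + (n:ℝ)) ^ y) := by ring
        _ ≤ γ * C₂ * ((1 + (n:ℝ)) * (1 + (n:ℝ)) ^ y) :=
            mul_le_mul_of_nonneg_left h5 (mul_pos hγ0 hC).le
        _ = γ * C₂ * (1 + (n:ℝ)) ^ (1 + y) := by rw [hsplit]
    have h3 : α 0 ^ γ ≤ α 0 ^ γ * (1 + (n:ℝ)) ^ (1 + y) := by
      nlinarith [Real.rpow_pos_of_pos (hα 0) γ]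
    rw [hB]; nlinarith
  have hmono2 : (α n ^ γ) ^ (1/γ) ≤ (B * (1 + (n:ℝ)) ^ (1 + y)) ^ (1/γ) :=
    Real.rpow_le_rpow (Real.rpow_pos_of_pos (hα n) γ).le hbound (div_pos one_pos hγ0).le
  have hL : (α n ^ γ) ^ (1/γ) = α n := by
    rw [one_div, Real.rpow_rpow_inv (le_of_lt (hα n)) (ne_of_gt hγ0)]
  have hR : (B * (1 + (n:ℝ)) ^ (1 + y)) ^ (1/γ)
      = B ^ (1/γ) * (1 + (n:ℝ)) ^ ((1 + y) / γ) := by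
    rw [Real.mul_rpow (le_of_lt hB0) (by positivity),
      ← Real.rpow_mul (by positivity : (0:ℝ) ≤ 1 + (n:ℝ)), mul_one_div]
  rw [hL, hR] at hmono2
  exact hmono2
end

section
/- Let 0 < γ < 1, y ≥ 0 and ε > 0. Define f(n) = (1 - 1/(n+1))^{(1+y)/γ} · (1 + (ε/n)(n/(n+1))^{-y}) for real n ≥ 1. If ε is small enough (depending only on γ and y), then f(n) ≤ 1 for all n ≥ 1. -/
/-! With `a = t / (t + 1) = 1 - 1 / (t + 1)` and `c = (1 + y) / γ ≥ 1 + y`, the left-hand side is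
`a ^ c + (ε / t) a ^ (c - y)`. Both exponents are at least `1` and `a ≤ 1`, so it is at most
`a (1 + ε / t) ≤ a (1 + 1 / t) = 1` as soon as `ε ≤ 1`. -/

open Real

theorem rpow_mul_one_add_mul_rpow_neg_le {a c y δ : ℝ} (ha0 : 0 < a) (ha1 : a ≤ 1) (hy : 0 ≤ y)
    (hc : 1 + y ≤ c) (hδ : 0 ≤ δ) :
    a ^ c * (1 + δ * a ^ (-y)) ≤ a * (1 + δ) := by
  have hsplit : a ^ c * (1 + δ * a ^ (-y)) = a ^ c + δ * a ^ (c - y) := by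
    rw [sub_eq_add_neg, rpow_add ha0]; ring
  have hac : a ^ c ≤ a := rpow_le_self_of_le_one ha0.le ha1 (by linarith)
  have hacy : a ^ (c - y) ≤ a := rpow_le_self_of_le_one ha0.le ha1 (by linarith)
  rw [hsplit]
  nlinarith

theorem div_add_one_mul_one_add_one_div {t : ℝ} (ht : 0 < t) : t / (t + 1) * (1 + 1 / t) = 1 := by
  field_simp

theorem stmt_3 (γ y : ℝ) (hγ0 : 0 < γ) (hγ1 : γ < 1) (hy : 0 ≤ y) :
    ∃ ε₀ : ℝ, 0 < ε₀ ∧ ∀ ε : ℝ, 0 < ε → ε ≤ ε₀ → ∀ t : ℝ, 1 ≤ t →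
      (1 - 1 / (t + 1)) ^ ((1 + y) / γ) * (1 + (ε / t) * (t / (t + 1)) ^ (-y)) ≤ 1 := by
  refine ⟨1, one_pos, fun ε hε hε1 t ht => ?_⟩
  have ht0 : 0 < t := by linarith
  have hbase : 1 - 1 / (t + 1) = t / (t + 1) := by field_simp; ring
  have ha0 : 0 < t / (t + 1) := by positivity
  have ha1 : t / (t + 1) ≤ 1 := (div_le_one (by linarith)).2 (by linarith)
  have hexp : 1 + y ≤ (1 + y) / γ := le_div_self (by linarith) hγ0 hγ1.le
  have hδ : ε / t ≤ 1 / t := div_le_div_of_nonneg_right hε1 ht0.le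
  rw [hbase]
  calc (t / (t + 1)) ^ ((1 + y) / γ) * (1 + ε / t * (t / (t + 1)) ^ (-y))
      ≤ t / (t + 1) * (1 + ε / t) :=
        rpow_mul_one_add_mul_rpow_neg_le ha0 ha1 hy hexp (by positivity)
    _ ≤ t / (t + 1) * (1 + 1 / t) := by gcongr
    _ = 1 := div_add_one_mul_one_add_one_div ht0
end

section
/- Let {α_n} be a sequence of non-negative reals with α_n ≤ α_{n-1} + C((α_{n-1})^{7/8} + 1)(1 + n)^{12} for all n ≥ 1. Then there exists C̃ > 0 such that α_n ≤ C̃ (1 + n)^{104} for all n ≥ 1. -/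
open Real

theorem stmt_6 (α : ℕ → ℝ) (hα : ∀ n, 0 ≤ α n) (C : ℝ) (hC : 0 < C)
    (hrec : ∀ n : ℕ, 1 ≤ n →
      α n ≤ α (n - 1) + C * ((α (n - 1)) ^ ((7 : ℝ) / 8) + 1) * (1 + (n : ℝ)) ^ (12 : ℝ)) :
    ∃ Ct : ℝ, 0 < Ct ∧ ∀ n : ℕ, 1 ≤ n →
      α n ≤ Ct * (1 + (n : ℝ)) ^ (104 : ℝ) := by
  obtain ⟨M, hMdef⟩ : ∃ M : ℝ, M = α 0 + (2 * C + 2) ^ (8 : ℕ) := ⟨_, rfl⟩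
  have hpow : (0 : ℝ) < (2 * C + 2) ^ (8 : ℕ) := by positivity
  have hM0 : 0 < M := hMdef ▸ add_pos_of_nonneg_of_pos (hα 0) hpow
  -- 2C ≤ M
  have h2 : 2 * C ≤ M := by
    have hs : (2 * C + 2) ≤ (2 * C + 2) ^ (8 : ℕ) :=
      le_self_pow₀ (by linarith) (by norm_num)
    have := hα 0
    rw [hMdef]; linarith
  -- 2C ≤ M^(1/8)
  have hMC : 2 * C ≤ M ^ ((1 : ℝ) / 8) := by
    have h3 : ((2 * C) ^ (8 : ℕ) : ℝ) ≤ M := by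
      have : ((2 * C) ^ (8 : ℕ) : ℝ) ≤ (2 * C + 2) ^ (8 : ℕ) :=
        pow_le_pow_left₀ (by positivity) (by linarith) 8
      have := hα 0
      rw [hMdef]; linarith
    have h4 : (((2 * C) ^ (8 : ℕ) : ℝ)) ^ ((1 : ℝ) / 8) ≤ M ^ ((1 : ℝ) / 8) :=
      Real.rpow_le_rpow (by positivity) h3 (by norm_num)
    have h5 : (((2 * C) ^ (8 : ℕ) : ℝ)) ^ ((1 : ℝ) / 8) = 2 * C := by
      rw [← Real.rpow_natCast (2 * C) 8, ← Real.rpow_mul (by positivity)]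
      norm_num
    linarith [h4, h5 ▸ h4]
  -- C * M^(7/8) ≤ M/2
  have h1 : C * M ^ ((7 : ℝ) / 8) ≤ M / 2 := by
    have e : M ^ ((7 : ℝ) / 8) * M ^ ((1 : ℝ) / 8) = M := by
      rw [← Real.rpow_add hM0]; norm_num
    have : (2 * C) * M ^ ((7 : ℝ) / 8) ≤ M ^ ((1 : ℝ) / 8) * M ^ ((7 : ℝ) / 8) :=
      mul_le_mul_of_nonneg_right hMC (Real.rpow_nonneg hM0.le _)
    nlinarith [this, e]
  -- main induction
  have claim : ∀ n : ℕ, α n ≤ M * (1 + (n : ℝ)) ^ (104 : ℝ) := by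
    intro n
    induction n with
    | zero => simp [Real.one_rpow]; linarith [hα 0, hpow]
    | succ n ih =>
      have hr := hrec (n + 1) (by omega)
      simp only [Nat.add_sub_cancel] at hr
      push_cast at hr
      obtain ⟨x, hxdef⟩ : ∃ x : ℝ, x = 1 + (n : ℝ) := ⟨_, rfl⟩
      obtain ⟨y, hydef⟩ : ∃ y : ℝ, y = 2 + (n : ℝ) := ⟨_, rfl⟩
      rw [← hxdef] at ih
      have hx1 : (1 : ℝ) ≤ x := by rw [hxdef]; linarith [Nat.cast_nonneg (α := ℝ) n]
      have hx0 : (0 : ℝ) < x := by linarith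
      have hy0 : (0 : ℝ) < y := by rw [hydef]; positivity
      have hxy : x ≤ y := by rw [hxdef, hydef]; linarith
      have hyx : y = 1 + x := by rw [hxdef, hydef]; ring
      have hr' : α (n + 1) ≤ α n + C * ((α n) ^ ((7 : ℝ) / 8) + 1) * y ^ (12 : ℝ) := by
        have : 1 + ((n : ℝ) + 1) = y := by rw [hydef]; ring
        rwa [this] at hr
      -- bound (α n)^(7/8)
      have ha : (α n) ^ ((7 : ℝ) / 8) ≤ M ^ ((7 : ℝ) / 8) * x ^ ((91 : ℝ)) := by
        have s1 : (α n) ^ ((7 : ℝ) / 8) ≤ (M * x ^ (104 : ℝ)) ^ ((7 : ℝ) / 8) :=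
          Real.rpow_le_rpow (hα n) ih (by norm_num)
        have s2 : (M * x ^ (104 : ℝ)) ^ ((7 : ℝ) / 8)
            = M ^ ((7 : ℝ) / 8) * (x ^ (104 : ℝ)) ^ ((7 : ℝ) / 8) :=
          Real.mul_rpow hM0.le (Real.rpow_nonneg hx0.le _)
        have s3 : (x ^ (104 : ℝ)) ^ ((7 : ℝ) / 8) = x ^ ((91 : ℝ)) := by
          rw [← Real.rpow_mul hx0.le]; norm_num
        rw [s2, s3] at s1; exact s1
      -- key estimate
      have hx91 : x ^ (91 : ℝ) ≤ y ^ (91 : ℝ) :=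
        Real.rpow_le_rpow hx0.le hxy (by norm_num)
      have hy91 : (1 : ℝ) ≤ y ^ (91 : ℝ) :=
        Real.one_le_rpow (by linarith) (by norm_num)
      have hb : C * (M ^ ((7 : ℝ) / 8) * x ^ (91 : ℝ) + 1) ≤ M * y ^ (91 : ℝ) := by
        have t1 : C * M ^ ((7 : ℝ) / 8) * x ^ (91 : ℝ) ≤ (M / 2) * y ^ (91 : ℝ) :=
          mul_le_mul h1 hx91 (Real.rpow_nonneg hx0.le _) (by linarith)
        have t2 : C ≤ (M / 2) * y ^ (91 : ℝ) := by
          calc C ≤ M / 2 := by linarith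
            _ = (M / 2) * 1 := by ring
            _ ≤ (M / 2) * y ^ (91 : ℝ) := by
                apply mul_le_mul_of_nonneg_left hy91 (by linarith)
        nlinarith [t1, t2]
      -- combine
      have hy12 : (0 : ℝ) ≤ y ^ (12 : ℝ) := Real.rpow_nonneg hy0.le _
      have step1 : α (n + 1) ≤ M * x ^ (104 : ℝ) + (M * y ^ (91 : ℝ)) * y ^ (12 : ℝ) := by
        have c1 : C * ((α n) ^ ((7 : ℝ) / 8) + 1) ≤ M * y ^ (91 : ℝ) := by
          have : C * ((α n) ^ ((7 : ℝ) / 8) + 1)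
              ≤ C * (M ^ ((7 : ℝ) / 8) * x ^ (91 : ℝ) + 1) := by
            apply mul_le_mul_of_nonneg_left (by linarith) hC.le
          linarith
        have c2 : C * ((α n) ^ ((7 : ℝ) / 8) + 1) * y ^ (12 : ℝ)
            ≤ (M * y ^ (91 : ℝ)) * y ^ (12 : ℝ) :=
          mul_le_mul_of_nonneg_right c1 hy12
        linarith [hr', c2, ih]
      have e1 : y ^ (91 : ℝ) * y ^ (12 : ℝ) = y ^ (103 : ℝ) := by
        rw [← Real.rpow_add hy0]; norm_num
      have step2 : α (n + 1) ≤ M * x ^ (104 : ℝ) + M * y ^ (103 : ℝ) := by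
        calc α (n + 1) ≤ M * x ^ (104 : ℝ) + (M * y ^ (91 : ℝ)) * y ^ (12 : ℝ) := step1
          _ = M * x ^ (104 : ℝ) + M * (y ^ (91 : ℝ) * y ^ (12 : ℝ)) := by ring
          _ = M * x ^ (104 : ℝ) + M * y ^ (103 : ℝ) := by rw [e1]
      -- x^104 + y^103 ≤ y^104
      have hx103 : x ^ (103 : ℝ) ≤ y ^ (103 : ℝ) :=
        Real.rpow_le_rpow hx0.le hxy (by norm_num)
      have e2 : x * x ^ (103 : ℝ) = x ^ (104 : ℝ) := by
        nth_rewrite 1 [← Real.rpow_one x]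
        rw [← Real.rpow_add hx0]; norm_num
      have e3 : y * y ^ (103 : ℝ) = y ^ (104 : ℝ) := by
        nth_rewrite 1 [← Real.rpow_one y]
        rw [← Real.rpow_add hy0]; norm_num
      have key : x ^ (104 : ℝ) + y ^ (103 : ℝ) ≤ y ^ (104 : ℝ) := by
        have : x * x ^ (103 : ℝ) ≤ x * y ^ (103 : ℝ) :=
          mul_le_mul_of_nonneg_left hx103 hx0.le
        have h5 : x ^ (104 : ℝ) ≤ x * y ^ (103 : ℝ) := by rw [← e2]; exact this
        have e4 : y ^ (104 : ℝ) = y ^ (103 : ℝ) + x * y ^ (103 : ℝ) := by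
          rw [← e3, hyx]; ring
        rw [e4]; linarith only [h5]
      have final : M * x ^ (104 : ℝ) + M * y ^ (103 : ℝ) ≤ M * y ^ (104 : ℝ) := by
        calc M * x ^ (104 : ℝ) + M * y ^ (103 : ℝ)
            = M * (x ^ (104 : ℝ) + y ^ (103 : ℝ)) := by ring
          _ ≤ M * y ^ (104 : ℝ) := mul_le_mul_of_nonneg_left key hM0.le
      have hcast : 1 + ((n + 1 : ℕ) : ℝ) = y := by rw [hydef]; push_cast; ring
      rw [hcast]
      linarith only [step2, final]
  exact ⟨M, hM0, fun n _ => claim n⟩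
end

section
/- Let 0 < γ < 1, y ≥ 0, and suppose C̃ > 0 satisfies C₂ C̃^{-γ} ≤ ε where ε is small enough so that (1+y)/γ - ε(n+1+y)/n · 2^y > 0 for all n ≥ 1. If α_{n-1} ≤ C̃ n^{(1+y)/γ} and α_n ≤ α_{n-1} + C₂ (α_{n-1})^{1-γ}(1+n)^y, then α_n ≤ C̃ (1+n)^{(1+y)/γ}. -/
open Real

theorem stmt_12 (γ y C₂ Ct ε : ℝ) (hγ0 : 0 < γ) (hγ1 : γ < 1) (hy : 0 ≤ y)
    (hC₂ : 0 < C₂) (hCt : 0 < Ct) (hε : 0 < ε)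
    (hεdef : C₂ * Ct ^ (-γ) ≤ ε)
    (hεsmall : ∀ n : ℕ, 1 ≤ n →
      0 < (1 + y) / γ - ε * ((n : ℝ) + 1 + y) / (n : ℝ) * 2 ^ y)
    (n : ℕ) (hn : 1 ≤ n) (αprev αn : ℝ) (hαprev : 0 ≤ αprev)
    (hbound : αprev ≤ Ct * (n : ℝ) ^ ((1 + y) / γ))
    (hrec : αn ≤ αprev + C₂ * αprev ^ (1 - γ) * (1 + (n : ℝ)) ^ y) :
    αn ≤ Ct * (1 + (n : ℝ)) ^ ((1 + y) / γ) := by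
  set p := (1 + y) / γ with hpdef
  set N := (n : ℝ) with hNdef
  have hN1 : (1 : ℝ) ≤ N := by rw [hNdef]; exact_mod_cast hn
  have hN0 : (0 : ℝ) < N := by linarith
  have h1y : (0 : ℝ) < 1 + y := by linarith
  have hpγ : p * γ = 1 + y := div_mul_cancel₀ _ hγ0.ne'
  have hp1y : 1 + y ≤ p := by
    rw [hpdef, le_div_iff₀ hγ0]; nlinarith
  have hp1 : 1 ≤ p := by linarith
  have hNp : (0 : ℝ) < N ^ p := rpow_pos_of_pos hN0 p
  have h2y : (0 : ℝ) < 2 ^ y := rpow_pos_of_pos two_pos y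
  -- Step 1: monotonicity of the recursion
  have step1 : αn ≤ Ct * N ^ p + C₂ * (Ct * N ^ p) ^ (1 - γ) * (1 + N) ^ y := by
    refine hrec.trans ?_
    gcongr <;> linarith
  -- Step 2: decompose (Ct * N^p)^(1-γ)
  have hdecomp : (Ct * N ^ p) ^ (1 - γ)
      = (Ct ^ (-γ) * Ct) * (N ^ p * N ^ (-(1 + y))) := by
    rw [mul_rpow hCt.le hNp.le, ← rpow_mul hN0.le,
      show p * (1 - γ) = p + (-(1 + y)) by nlinarith,
      rpow_add hN0, show (1 - γ) = -γ + 1 by ring, rpow_add hCt, rpow_one]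
  -- Step 3: bound (1+N)^y
  have h1N : (1 + N) ^ y ≤ 2 ^ y * N ^ y := by
    rw [← mul_rpow (by norm_num) hN0.le]
    exact rpow_le_rpow (by linarith) (by linarith) hy
  have hNinv : N ^ (-(1 + y)) * (2 ^ y * N ^ y) = 2 ^ y / N := by
    rw [show -(1 + y) = -y + -1 by ring, rpow_add hN0,
      rpow_neg hN0.le y, rpow_neg_one]
    field_simp
  have step2 : C₂ * (Ct * N ^ p) ^ (1 - γ) * (1 + N) ^ y
      ≤ ε * Ct * (N ^ p * (2 ^ y / N)) := by
    rw [hdecomp]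
    have hNneg : (0:ℝ) < N ^ (-(1 + y)) := rpow_pos_of_pos hN0 _
    calc C₂ * (Ct ^ (-γ) * Ct * (N ^ p * N ^ (-(1 + y)))) * (1 + N) ^ y
        ≤ C₂ * (Ct ^ (-γ) * Ct * (N ^ p * N ^ (-(1 + y)))) * (2 ^ y * N ^ y) := by
          have hpos : 0 ≤ C₂ * (Ct ^ (-γ) * Ct * (N ^ p * N ^ (-(1 + y)))) := by positivity
          exact mul_le_mul_of_nonneg_left h1N hpos
      _ = (C₂ * Ct ^ (-γ)) * Ct * (N ^ p * (N ^ (-(1 + y)) * (2 ^ y * N ^ y))) := by ring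
      _ = (C₂ * Ct ^ (-γ)) * Ct * (N ^ p * (2 ^ y / N)) := by rw [hNinv]
      _ ≤ ε * Ct * (N ^ p * (2 ^ y / N)) := by
          have hpos2 : (0:ℝ) ≤ Ct * (N ^ p * (2 ^ y / N)) := by positivity
          nlinarith
  -- Step 4: Bernoulli lower bound on (1+N)^p
  have bern : N ^ p * (1 + p * (1 / N)) ≤ (1 + N) ^ p := by
    have hsN : (0:ℝ) ≤ 1 / N := by positivity
    have h := one_add_mul_self_le_rpow_one_add (s := 1 / N) (by linarith) hp1
    have h1 : (1 + 1 / N : ℝ) = (1 + N) / N := by field_simp; ring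
    have h2 : ((1 + N) / N) ^ p = (1 + N) ^ p / N ^ p :=
      div_rpow (by linarith) hN0.le p
    rw [h1, h2] at h
    have h3 := (le_div_iff₀ hNp).mp h
    rw [mul_comm]
    exact h3
  -- Step 5: compare coefficients using hεsmall
  have hN0' : (0:ℝ) < (n : ℝ) := hN0
  have hεp : ε * 2 ^ y ≤ p := by
    have h := hεsmall n hn
    have hq : 1 ≤ ((n:ℝ) + 1 + y) / (n:ℝ) := (one_le_div hN0').2 (by
      have : (1:ℝ) ≤ (n:ℝ) := hN1
      linarith)
    have heq : ε * ((n:ℝ) + 1 + y) / (n:ℝ) * 2 ^ y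
        = ε * 2 ^ y * (((n:ℝ) + 1 + y) / (n:ℝ)) := by ring
    rw [heq] at h
    have h4 := mul_le_mul_of_nonneg_left hq (mul_pos hε h2y).le
    rw [mul_one] at h4
    linarith
  -- Final assembly
  have final : Ct * N ^ p + ε * Ct * (N ^ p * (2 ^ y / N)) ≤ Ct * (1 + N) ^ p := by
    have key : ε * (2 ^ y / N) ≤ p * (1 / N) := by
      rw [show ε * (2 ^ y / N) = (ε * 2 ^ y) / N by ring,
        show p * (1 / N) = p / N by ring]
      gcongr
    have hm := mul_le_mul_of_nonneg_left key (mul_pos hCt hNp).le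
    have h1 : Ct * N ^ p + ε * Ct * (N ^ p * (2 ^ y / N))
        ≤ Ct * (N ^ p * (1 + p * (1 / N))) := by
      calc Ct * N ^ p + ε * Ct * (N ^ p * (2 ^ y / N))
          = Ct * N ^ p + Ct * N ^ p * (ε * (2 ^ y / N)) := by ring
        _ ≤ Ct * N ^ p + Ct * N ^ p * (p * (1 / N)) := by linarith
        _ = Ct * (N ^ p * (1 + p * (1 / N))) := by ring
    have h2 : Ct * (N ^ p * (1 + p * (1 / N))) ≤ Ct * (1 + N) ^ p := by
      have := mul_le_mul_of_nonneg_left bern hCt.le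
      linarith
    linarith
  calc αn ≤ Ct * N ^ p + C₂ * (Ct * N ^ p) ^ (1 - γ) * (1 + N) ^ y := step1
    _ ≤ Ct * N ^ p + ε * Ct * (N ^ p * (2 ^ y / N)) := by linarith
    _ ≤ Ct * (1 + N) ^ p := final
end

section
/- Let {α_n}_{n≥0} be non-negative reals with α_n ≤ α_{n-1} + C(α_{n-1})^{1-γ}(1+n)^y for n ≥ 1, where 0 < γ < 1, C > 0, y ≥ 0, and α_n ≥ 1 for all n. Then there exists C̃ depending only on C, γ, y, α_0 such that for every n ≥ 1, α_n ≤ C̃ (1+n)^{(1+y)/γ}. In particular the growth exponent (1+y)/γ is independent of C and α_0. -/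
open Real

theorem stmt_15 (γ C y α₀ : ℝ) (hγ0 : 0 < γ) (hγ1 : γ < 1) (hC : 0 < C) (hy : 0 ≤ y) :
    ∃ Ct : ℝ, 0 < Ct ∧ ∀ α : ℕ → ℝ, (∀ n, 0 ≤ α n) → (∀ n, 1 ≤ α n) → α 0 = α₀ →
      (∀ n : ℕ, 1 ≤ n →
        α n ≤ α (n - 1) + C * (α (n - 1)) ^ (1 - γ) * (1 + (n : ℝ)) ^ y) →
      ∀ n : ℕ, 1 ≤ n → α n ≤ Ct * (1 + (n : ℝ)) ^ ((1 + y) / γ) := by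
  set e : ℝ := (1 + y) / γ with he_def
  have he1 : 1 ≤ e := by
    rw [he_def, le_div_iff₀ hγ0]; nlinarith
  have he0 : 0 < e := lt_of_lt_of_le one_pos he1
  set K : ℝ := (C * 2 ^ y / e) ^ (1/γ) with hK_def
  refine ⟨max (max 1 (α₀ + C * α₀ ^ (1-γ) * 2 ^ y)) K, ?_, ?_⟩
  · exact lt_of_lt_of_le one_pos (le_max_of_le_left (le_max_left _ _))
  intro α hpos hone h0 hrec
  set Ct := max (max 1 (α₀ + C * α₀ ^ (1-γ) * 2 ^ y)) K with hCt_def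
  have hCt1 : (1:ℝ) ≤ Ct := le_max_of_le_left (le_max_left _ _)
  have hCt0 : (0:ℝ) < Ct := lt_of_lt_of_le one_pos hCt1
  have hbase0 : (0:ℝ) ≤ C * 2 ^ y / e := by positivity
  have hKγ : K ^ γ = C * 2 ^ y / e := by
    rw [hK_def, ← Real.rpow_mul hbase0, one_div_mul_cancel hγ0.ne', Real.rpow_one]
  have hCtγ : C * 2 ^ y / e ≤ Ct ^ γ := by
    rw [← hKγ]
    exact Real.rpow_le_rpow (by positivity) (le_max_right _ _) hγ0.le
  -- key: C * 2^y * Ct^(1-γ) ≤ e * Ct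
  have hkey : C * 2 ^ y * Ct ^ (1-γ) ≤ e * Ct := by
    have h1 : Ct ^ γ * Ct ^ (1-γ) = Ct := by
      rw [← Real.rpow_add hCt0]; norm_num
    have h2 : (C * 2 ^ y / e) * Ct ^ (1-γ) ≤ Ct ^ γ * Ct ^ (1-γ) := by
      apply mul_le_mul_of_nonneg_right hCtγ (by positivity)
    rw [h1] at h2
    have hpow : (0:ℝ) < Ct ^ (1-γ) := Real.rpow_pos_of_pos hCt0 _
    calc C * 2 ^ y * Ct ^ (1-γ) = e * ((C * 2 ^ y / e) * Ct ^ (1-γ)) := by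
          field_simp
      _ ≤ e * Ct := by exact mul_le_mul_of_nonneg_left h2 he0.le
  -- Bernoulli-type lemma
  have hbern : ∀ x : ℝ, 1 ≤ x → x ^ e + e * x ^ (e-1) ≤ (x + 1) ^ e := by
    intro x hx
    have hx0 : (0:ℝ) < x := lt_of_lt_of_le one_pos hx
    have hs : (-1:ℝ) ≤ 1/x := by
      have h0x : (0:ℝ) ≤ 1/x := by positivity
      linarith
    have hb := one_add_mul_self_le_rpow_one_add hs he1
    have h1 : x ^ e * (1 + e * (1/x)) ≤ x ^ e * (1 + 1/x) ^ e :=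
      mul_le_mul_of_nonneg_left hb (Real.rpow_nonneg hx0.le _)
    have h2 : x ^ e * (1 + 1/x) ^ e = (x + 1) ^ e := by
      rw [← Real.mul_rpow hx0.le (by positivity)]
      congr 1; field_simp
    have h3 : x ^ e * (1 + e * (1/x)) = x ^ e + e * x ^ (e-1) := by
      rw [Real.rpow_sub hx0, Real.rpow_one]
      field_simp
    rw [h2, h3] at h1; exact h1
  intro n hn
  induction n, hn using Nat.le_induction with
  | base =>
    have h := hrec 1 le_rfl
    simp only [Nat.sub_self] at h
    rw [h0] at h
    have h2 : (1 + ((1:ℕ):ℝ)) = 2 := by norm_num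
    rw [h2] at h ⊢
    have hCtb : α₀ + C * α₀ ^ (1-γ) * 2 ^ y ≤ Ct := le_max_of_le_left (le_max_right _ _)
    have h2e : (1:ℝ) ≤ (2:ℝ) ^ e := Real.one_le_rpow (by norm_num) he0.le
    calc α 1 ≤ α₀ + C * α₀ ^ (1-γ) * 2 ^ y := h
      _ ≤ Ct := hCtb
      _ = Ct * 1 := (mul_one Ct).symm
      _ ≤ Ct * 2 ^ e := mul_le_mul_of_nonneg_left h2e hCt0.le
  | succ n hn ih =>
    have h := hrec (n+1) (by omega)
    have hsub : n + 1 - 1 = n := by omega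
    rw [hsub] at h
    have hx : (1:ℝ) ≤ 1 + (n:ℝ) := by linarith [(Nat.cast_nonneg n : (0:ℝ) ≤ (n:ℝ))]
    have hx0 : (0:ℝ) < 1 + (n:ℝ) := lt_of_lt_of_le one_pos hx
    have hcast : (1 + ((n+1:ℕ):ℝ)) = (1 + (n:ℝ)) + 1 := by push_cast; ring
    rw [hcast] at h ⊢
    have hαn : (0:ℝ) ≤ α n := hpos n
    -- bound α n ^ (1-γ)
    have hγ' : (0:ℝ) ≤ 1 - γ := by linarith
    have hr1 : α n ^ (1-γ) ≤ (Ct * (1 + (n:ℝ)) ^ e) ^ (1-γ) :=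
      Real.rpow_le_rpow hαn ih hγ'
    have hr2 : (Ct * (1 + (n:ℝ)) ^ e) ^ (1-γ)
        = Ct ^ (1-γ) * (1 + (n:ℝ)) ^ (e * (1-γ)) := by
      rw [Real.mul_rpow hCt0.le (Real.rpow_nonneg hx0.le _), ← Real.rpow_mul hx0.le]
    -- bound (2 + n)^y
    have hr3 : ((1 + (n:ℝ)) + 1) ^ y ≤ 2 ^ y * (1 + (n:ℝ)) ^ y := by
      rw [← Real.mul_rpow (by norm_num) hx0.le]
      apply Real.rpow_le_rpow (by positivity) (by linarith) hy
    have hexp : e * (1-γ) + y = e - 1 := by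
      rw [he_def]; field_simp; ring
    have hterm : C * (α n) ^ (1-γ) * ((1 + (n:ℝ)) + 1) ^ y
        ≤ e * Ct * (1 + (n:ℝ)) ^ (e - 1) := by
      have step1 : C * (α n) ^ (1-γ) * ((1 + (n:ℝ)) + 1) ^ y
          ≤ C * (Ct ^ (1-γ) * (1 + (n:ℝ)) ^ (e * (1-γ))) * (2 ^ y * (1 + (n:ℝ)) ^ y) := by
        apply mul_le_mul
        · apply mul_le_mul_of_nonneg_left _ hC.le
          rw [← hr2]; exact hr1
        · exact hr3
        · positivity
        · positivity
      have step2 : C * (Ct ^ (1-γ) * (1 + (n:ℝ)) ^ (e * (1-γ))) * (2 ^ y * (1 + (n:ℝ)) ^ y)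
          = C * 2 ^ y * Ct ^ (1-γ) * (1 + (n:ℝ)) ^ (e - 1) := by
        rw [← hexp, Real.rpow_add hx0]; ring
      have step3 : C * 2 ^ y * Ct ^ (1-γ) * (1 + (n:ℝ)) ^ (e - 1)
          ≤ e * Ct * (1 + (n:ℝ)) ^ (e - 1) :=
        mul_le_mul_of_nonneg_right hkey (Real.rpow_nonneg hx0.le _)
      calc C * (α n) ^ (1-γ) * ((1 + (n:ℝ)) + 1) ^ y
          ≤ C * (Ct ^ (1-γ) * (1 + (n:ℝ)) ^ (e * (1-γ))) * (2 ^ y * (1 + (n:ℝ)) ^ y) := step1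
        _ = C * 2 ^ y * Ct ^ (1-γ) * (1 + (n:ℝ)) ^ (e - 1) := step2
        _ ≤ e * Ct * (1 + (n:ℝ)) ^ (e - 1) := step3
    have hb := hbern (1 + (n:ℝ)) hx
    calc α (n+1) ≤ α n + C * (α n) ^ (1-γ) * ((1 + (n:ℝ)) + 1) ^ y := h
      _ ≤ Ct * (1 + (n:ℝ)) ^ e + e * Ct * (1 + (n:ℝ)) ^ (e - 1) := add_le_add ih hterm
      _ = Ct * ((1 + (n:ℝ)) ^ e + e * (1 + (n:ℝ)) ^ (e - 1)) := by ring
      _ ≤ Ct * ((1 + (n:ℝ)) + 1) ^ e := mul_le_mul_of_nonneg_left hb hCt0.le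
end
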